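/- For the ternary symmetric channel with parameter p (P(y|x) = 1−2p if y=x, p otherwise) and the binary symmetric channel with parameter p, the sum of their exponents satisfies: Ẽ_{3} of the ternary channel equals −log(2√(p(1−2p)) + p) = (1/2)log(1/p) + O(1) as p → 0, while Ẽ_{3} of the BSC equals −(2/3)log(2√(p(1−p))) = (1/3)log(1/p) + O(1), so the sum is (5/6)log(1/p) + O(1), which is strictly less than log(1/p) + O(1) for all sufficiently small p. -/

import Mathlib

/-!
For a symmetric channel on `K` letters (`a` on the diagonal, `b` off it) the Bhattacharyya
distance vanishes on equal inputs and equals `δ = -log (2√(ab) + (K - 2) b) ≥ 0` on distinct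
ones. So maximizing the pairwise sum over triples of inputs means maximizing the number of
distinct pairs: all three for the ternary channel, only two for the BSC (pigeonhole).
Factoring `√p` out of both Bhattacharyya coefficients splits the sum of the two exponents into
`(1/2 + 1/3) log (1/p)` plus a function continuous at `p = 0`.
-/

open Real Filter Topology Finset

section Bhattacharyya

variable {α β : Type*} [Fintype β]

noncomputable def bhattacharyyaDist (P : α → β → ℝ) (x x' : α) : ℝ :=
  -log (∑ y, √(P x y * P x' y))

theorem bhattacharyyaDist_self {P : α → β → ℝ} (hP : ∀ x y, 0 ≤ P x y)
    (hsum : ∀ x, ∑ y, P x y = 1) (x : α) : bhattacharyyaDist P x x = 0 := by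
  simp [bhattacharyyaDist, sqrt_mul_self (hP x _), hsum]

end Bhattacharyya

theorem two_mul_sqrt_mul_add_le_one {a b n : ℝ} (ha : 0 ≤ a) (hb : 0 ≤ b)
    (hsum : a + (n - 1) * b = 1) : 2 * √(a * b) + (n - 2) * b ≤ 1 := by
  have : 2 * √(a * b) ≤ a + b := by
    rw [sqrt_mul ha]
    nlinarith [sq_nonneg (√a - √b), sq_sqrt ha, sq_sqrt hb]
  linarith

section PairwiseSum

variable {α : Type*}

def pairwiseSum {M : ℕ} (d : α → α → ℝ) (x : Fin M → α) : ℝ :=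
  ∑ q ∈ univ.filter (fun q : Fin M × Fin M => q.1 < q.2), d (x q.1) (x q.2)

theorem pairwiseSum_fin_three (d : α → α → ℝ) (x : Fin 3 → α) :
    pairwiseSum d x = d (x 0) (x 1) + d (x 0) (x 2) + d (x 1) (x 2) := by
  rw [pairwiseSum, show univ.filter (fun q : Fin 3 × Fin 3 => q.1 < q.2) = {(0, 1), (0, 2), (1, 2)}
    by decide, sum_insert (by decide), sum_insert (by decide), sum_singleton, add_assoc]

theorem eq_or_eq_or_eq_of_not_injective_fin_three {x : Fin 3 → α}
    (hx : ¬ Function.Injective x) : x 0 = x 1 ∨ x 0 = x 2 ∨ x 1 = x 2 := by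
  contrapose! hx
  obtain ⟨h01, h02, h12⟩ := hx
  intro i j hij
  fin_cases i <;> fin_cases j <;> simp_all [eq_comm]

variable {d : α → α → ℝ} {δ : ℝ}

theorem pairwiseSum_fin_three_le (hle : ∀ a b, d a b ≤ δ) (x : Fin 3 → α) :
    pairwiseSum d x ≤ 3 * δ := by
  rw [pairwiseSum_fin_three]
  linarith [hle (x 0) (x 1), hle (x 0) (x 2), hle (x 1) (x 2)]

theorem pairwiseSum_fin_three_le_of_not_injective (hle : ∀ a b, d a b ≤ δ)
    (hzero : ∀ a, d a a = 0) {x : Fin 3 → α} (hx : ¬ Function.Injective x) :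
    pairwiseSum d x ≤ 2 * δ := by
  rw [pairwiseSum_fin_three]
  have h01 := hle (x 0) (x 1); have h02 := hle (x 0) (x 2); have h12 := hle (x 1) (x 2)
  rcases eq_or_eq_or_eq_of_not_injective_fin_three hx with h | h | h <;>
    simp only [h, hzero] at h01 h02 h12 ⊢ <;> linarith

theorem pairwiseSum_fin_three_of_injective (hne : ∀ a b, a ≠ b → d a b = δ)
    {x : Fin 3 → α} (hx : Function.Injective x) : pairwiseSum d x = 3 * δ := by
  rw [pairwiseSum_fin_three, hne _ _ (hx.ne (by decide)), hne _ _ (hx.ne (by decide)),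
    hne _ _ (hx.ne (by decide))]
  ring

theorem iSup_pairwiseSum_of_three_le_card [Fintype α] (hle : ∀ a b, d a b ≤ δ)
    (hne : ∀ a b, a ≠ b → d a b = δ) (hα : 3 ≤ Fintype.card α) :
    ⨆ x : Fin 3 → α, pairwiseSum d x = 3 * δ := by
  obtain ⟨e⟩ : Nonempty (Fin 3 ↪ α) := Function.Embedding.nonempty_of_card_le (by simpa using hα)
  have : Nonempty α := ⟨e 0⟩
  exact le_antisymm (ciSup_le (pairwiseSum_fin_three_le hle))
    ((pairwiseSum_fin_three_of_injective hne e.injective).symm.le.trans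
      (le_ciSup (Finite.bddAbove_range _) _))

theorem iSup_pairwiseSum_of_card_eq_two [Fintype α] (hle : ∀ a b, d a b ≤ δ)
    (hzero : ∀ a, d a a = 0) (hne : ∀ a b, a ≠ b → d a b = δ) (hα : Fintype.card α = 2) :
    ⨆ x : Fin 3 → α, pairwiseSum d x = 2 * δ := by
  obtain ⟨a, b, hab⟩ := Fintype.exists_pair_of_one_lt_card (by omega : 1 < Fintype.card α)
  have : Nonempty α := ⟨a⟩
  have hwitness : pairwiseSum d ![a, b, b] = 2 * δ := by
    simp only [pairwiseSum_fin_three]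
    simp [hne a b hab, hzero]
    ring
  refine le_antisymm (ciSup_le fun x => pairwiseSum_fin_three_le_of_not_injective hle hzero ?_)
    (hwitness.symm.le.trans (le_ciSup (Finite.bddAbove_range _) _))
  exact fun hinj => by simpa [hα] using Fintype.card_le_of_injective x hinj

end PairwiseSum

section SymmetricChannel

variable {α : Type*} [Fintype α] [DecidableEq α] {a b : ℝ}

def symmChannel (a b : ℝ) (x y : α) : ℝ := if y = x then a else b

theorem sum_symmChannel (a b : ℝ) (x : α) :
    ∑ y, symmChannel a b x y = a + (Fintype.card α - 1) * b := by
  have : ∀ y, symmChannel a b x y = b + if y = x then a - b else 0 := by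
    intro y; unfold symmChannel; split_ifs <;> ring
  simp only [this, sum_add_distrib, sum_ite_eq', mem_univ, if_true, sum_const, card_univ,
    nsmul_eq_mul]
  ring

theorem sum_sqrt_symmChannel_of_ne (hb : 0 ≤ b) {x x' : α} (hx : x ≠ x') :
    ∑ y, √(symmChannel a b x y * symmChannel a b x' y)
      = 2 * √(a * b) + (Fintype.card α - 2) * b := by
  have : ∀ y, √(symmChannel a b x y * symmChannel a b x' y)
      = b + ((if y = x then √(a * b) - b else 0) + if y = x' then √(a * b) - b else 0) := by
    intro y
    unfold symmChannel
    by_cases h : y = x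
    · subst h; simp [hx]
    · by_cases h' : y = x'
      · subst h'; simp [h, mul_comm]
      · simp [h, h', sqrt_mul_self hb]
  simp only [this, sum_add_distrib, sum_ite_eq', mem_univ, if_true, sum_const, card_univ,
    nsmul_eq_mul]
  ring

variable (ha : 0 ≤ a) (hb : 0 ≤ b) (hsum : a + (Fintype.card α - 1) * b = 1)
include ha hb hsum

theorem bhattacharyyaDist_symmChannel (x x' : α) :
    bhattacharyyaDist (symmChannel a b) x x'
      = if x = x' then 0 else -log (2 * √(a * b) + (Fintype.card α - 2) * b) := by
  split_ifs with h
  · subst h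
    refine bhattacharyyaDist_self (fun x y => ?_) (fun x => (sum_symmChannel a b x).trans hsum) x
    unfold symmChannel; split_ifs <;> assumption
  · rw [bhattacharyyaDist, sum_sqrt_symmChannel_of_ne hb h]

theorem bhattacharyyaDist_symmChannel_le (hα : 2 ≤ Fintype.card α) (x x' : α) :
    bhattacharyyaDist (symmChannel a b) x x'
      ≤ -log (2 * √(a * b) + (Fintype.card α - 2) * b) := by
  have hα' : (2 : ℝ) ≤ Fintype.card α := by exact_mod_cast hα
  have hnonneg : 0 ≤ -log (2 * √(a * b) + (Fintype.card α - 2) * b) :=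
    neg_nonneg.2 (log_nonpos (by positivity) (two_mul_sqrt_mul_add_le_one ha hb hsum))
  rw [bhattacharyyaDist_symmChannel ha hb hsum]
  split_ifs <;> simp [hnonneg]

theorem iSup_pairwiseSum_symmChannel_of_three_le_card (hα : 3 ≤ Fintype.card α) :
    ⨆ x : Fin 3 → α, pairwiseSum (bhattacharyyaDist (symmChannel a b)) x
      = 3 * -log (2 * √(a * b) + (Fintype.card α - 2) * b) :=
  iSup_pairwiseSum_of_three_le_card (bhattacharyyaDist_symmChannel_le ha hb hsum (by omega))
    (fun x x' h => by simp [bhattacharyyaDist_symmChannel ha hb hsum, h]) hα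

theorem iSup_pairwiseSum_symmChannel_of_card_eq_two (hα : Fintype.card α = 2) :
    ⨆ x : Fin 3 → α, pairwiseSum (bhattacharyyaDist (symmChannel a b)) x
      = 2 * -log (2 * √(a * b) + (Fintype.card α - 2) * b) :=
  iSup_pairwiseSum_of_card_eq_two (bhattacharyyaDist_symmChannel_le ha hb hsum hα.ge)
    (fun x => by simp [bhattacharyyaDist_symmChannel ha hb hsum])
    (fun x x' h => by simp [bhattacharyyaDist_symmChannel ha hb hsum, h]) hα

end SymmetricChannel

-- `Ẽ_{3,P}`; the factor `2 / (3 * 2)` is `2 / (M (M - 1))` at `M = 3`.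
noncomputable def expurgatedExponent3 {α : Type*} [Fintype α] (P : α → α → ℝ) : ℝ :=
  2 / ((3 : ℝ) * 2) * ⨆ x : Fin 3 → α, pairwiseSum (bhattacharyyaDist P) x

theorem expurgatedExponent3_ternary {p : ℝ} (hp : 0 ≤ p) (hp2 : p ≤ 1 / 2) :
    expurgatedExponent3 (symmChannel (1 - 2 * p) p : Fin 3 → Fin 3 → ℝ)
      = -log (2 * √(p * (1 - 2 * p)) + p) := by
  rw [expurgatedExponent3, iSup_pairwiseSum_symmChannel_of_three_le_card (by linarith) hp
    (by norm_num) (by simp), mul_comm (1 - 2 * p) p, Fintype.card_fin]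
  ring_nf

theorem expurgatedExponent3_bsc {p : ℝ} (hp : 0 ≤ p) (hp1 : p ≤ 1) :
    expurgatedExponent3 (symmChannel (1 - p) p : Fin 2 → Fin 2 → ℝ)
      = -(2 / 3) * log (2 * √(p * (1 - p))) := by
  rw [expurgatedExponent3, iSup_pairwiseSum_symmChannel_of_card_eq_two (by linarith) hp
    (by norm_num) (by simp), mul_comm (1 - p) p, Fintype.card_fin]
  ring_nf

section Asymptotics

-- `Ẽ₃(ternary) + Ẽ₃(BSC) - (5/6) log (1/p)` once `√p` is factored out of both coefficients.
noncomputable def exponentSumCorrection (p : ℝ) : ℝ :=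
  -log (2 * √(1 - 2 * p) + √p) - 2 / 3 * log (2 * √(1 - p))

theorem neg_log_sqrt_mul {p c : ℝ} (hp : 0 < p) (hc : 0 < c) :
    -log (√p * c) = 1 / 2 * log (1 / p) - log c := by
  rw [log_mul (sqrt_pos.2 hp).ne' hc.ne', log_sqrt hp.le, one_div p, log_inv]
  ring

theorem exponentSum_eq {p : ℝ} (hp : 0 < p) (hp2 : p < 1 / 2) :
    -log (2 * √(p * (1 - 2 * p)) + p) + -(2 / 3) * log (2 * √(p * (1 - p)))
      = 5 / 6 * log (1 / p) + exponentSumCorrection p := by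
  have htern : 2 * √(p * (1 - 2 * p)) + p = √p * (2 * √(1 - 2 * p) + √p) := by
    rw [sqrt_mul hp.le, mul_add, mul_self_sqrt hp.le]; ring
  have hbsc : 2 * √(p * (1 - p)) = √p * (2 * √(1 - p)) := by
    rw [sqrt_mul hp.le]; ring
  have hbsc_pos : 0 < 2 * √(1 - p) := mul_pos two_pos (sqrt_pos.2 (by linarith))
  rw [htern, hbsc, neg_log_sqrt_mul hp (by positivity), neg_mul, ← mul_neg,
    neg_log_sqrt_mul hp hbsc_pos, exponentSumCorrection]
  ring

theorem continuousAt_exponentSumCorrection : ContinuousAt exponentSumCorrection 0 := by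
  unfold exponentSumCorrection
  fun_prop (disch := norm_num)

theorem tendsto_exponentSumCorrection :
    Tendsto exponentSumCorrection (𝓝[>] 0) (𝓝 (exponentSumCorrection 0)) :=
  continuousAt_exponentSumCorrection.tendsto.mono_left nhdsWithin_le_nhds

theorem tendsto_exponentSumCorrection_sub_log :
    Tendsto (fun p => exponentSumCorrection p - 1 / 6 * log (1 / p)) (𝓝[>] 0) atBot := by
  have := tendsto_exponentSumCorrection.add_atBot
    (tendsto_log_nhdsGT_zero.const_mul_atBot (by norm_num : (0 : ℝ) < 1 / 6))
  simpa [one_div, log_inv, sub_eq_add_neg] using this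

end Asymptotics

/-- For the ternary symmetric channel and BSC with parameter `p`:
`Ẽ₃(ternary) = -log(2√(p(1-2p)) + p)` and `Ẽ₃(BSC) = -(2/3)log(2√(p(1-p)))`;
their sum is `(5/6)log(1/p) + O(1)` as `p → 0⁺`, and is strictly below
`log(1/p) + O(1)`, i.e., falls below `log(1/p) - C` for every constant `C`
for sufficiently small `p`. -/
theorem stmt19 :
    let dB : ∀ {K : ℕ}, (Fin K → Fin K → ℝ) → Fin K → Fin K → ℝ :=
      fun P x x' => - Real.log (∑ y, Real.sqrt (P x y * P x' y))
    let Etil3 : ∀ {K : ℕ}, (Fin K → Fin K → ℝ) → ℝ := fun P =>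
      (2 / ((3:ℝ) * 2)) * ⨆ x : Fin 3 → _,
        ∑ q ∈ Finset.univ.filter (fun q : Fin 3 × Fin 3 => q.1 < q.2), dB P (x q.1) (x q.2)
    let Ptern : ℝ → (Fin 3 → Fin 3 → ℝ) := fun p x y => if y = x then 1 - 2 * p else p
    let Pbsc : ℝ → (Fin 2 → Fin 2 → ℝ) := fun p x y => if y = x then 1 - p else p
    (∀ p : ℝ, 0 < p → p < 1/3 →
        Etil3 (Ptern p) = - Real.log (2 * Real.sqrt (p * (1 - 2 * p)) + p)) ∧
      (∀ p : ℝ, 0 < p → p < 1/2 →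
        Etil3 (Pbsc p) = - (2/3) * Real.log (2 * Real.sqrt (p * (1 - p)))) ∧
      (∃ C : ℝ, ∀ᶠ p in nhdsWithin (0:ℝ) (Set.Ioi 0),
        |Etil3 (Ptern p) + Etil3 (Pbsc p) - (5/6) * Real.log (1/p)| ≤ C) ∧
      (∀ C : ℝ, ∀ᶠ p in nhdsWithin (0:ℝ) (Set.Ioi 0),
        Etil3 (Ptern p) + Etil3 (Pbsc p) < Real.log (1/p) - C) := by
  intro dB Etil3 Ptern Pbsc
  have htern (p : ℝ) (hp : 0 < p) (hp3 : p < 1 / 3) :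
      Etil3 (Ptern p) = -log (2 * √(p * (1 - 2 * p)) + p) :=
    expurgatedExponent3_ternary hp.le (by linarith)
  have hbsc (p : ℝ) (hp : 0 < p) (hp2 : p < 1 / 2) :
      Etil3 (Pbsc p) = -(2 / 3) * log (2 * √(p * (1 - p))) :=
    expurgatedExponent3_bsc hp.le (by linarith)
  have hsum : ∀ᶠ p in 𝓝[>] 0, Etil3 (Ptern p) + Etil3 (Pbsc p)
      = 5 / 6 * log (1 / p) + exponentSumCorrection p := by
    filter_upwards [Ioo_mem_nhdsGT (by norm_num : (0 : ℝ) < 1 / 3)] with p ⟨hp, hp3⟩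
    rw [htern p hp hp3, hbsc p hp (by linarith), exponentSum_eq hp (by linarith)]
  refine ⟨htern, hbsc, ⟨|exponentSumCorrection 0| + 1, ?_⟩, fun C => ?_⟩
  · filter_upwards [hsum, tendsto_exponentSumCorrection.abs.eventually_lt_const (lt_add_one _)]
      with p hp hbound
    rw [hp, add_sub_cancel_left]
    exact hbound.le
  · filter_upwards [hsum, tendsto_exponentSumCorrection_sub_log.eventually_lt_atBot (-C)]
      with p hp hlt
    linarith
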